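/- (Generalized Schanuel Lemma) Let M be a right R-module and K ∈ add(M). Given short exact sequences 0 → D → K → C → 0 (with epimorphism ρ: K → C) and 0 → A → B → C → 0 (with epimorphism β: B → C), where β is an M-pure epimorphism, there exists a short exact sequence 0 → D → K ⊕ A → B → 0. -/

import Mathlib

/-- A module is Rickart if the kernel of every endomorphism is a direct summand. -/
def IsRickart (R M : Type*) [Ring R] [AddCommGroup M] [Module R M] : Prop :=
  ∀ φ : M →ₗ[R] M, ∃ N : Submodule R M, IsCompl (LinearMap.ker φ) N

/-- A module is finite Σ-Rickart if `M^(n)` is Rickart for every `n > 0`. -/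
def IsFinSigmaRickart (R M : Type*) [Ring R] [AddCommGroup M] [Module R M] : Prop :=
  ∀ n : ℕ, 0 < n → IsRickart R (Fin n → M)

/-- `N` is finitely `M`-generated if there is an epimorphism `M^(n) → N` for some `n > 0`. -/
def FinMGen (R M N : Type*) [Ring R] [AddCommGroup M] [Module R M]
    [AddCommGroup N] [Module R N] : Prop :=
  ∃ n : ℕ, 0 < n ∧ ∃ f : (Fin n → M) →ₗ[R] N, Function.Surjective f


/-- An epimorphism `μ` is `M`-pure if every homomorphism from `M` to its codomain
factors through `μ`. -/
def MPure (R M : Type*) {X Y : Type*} [Ring R] [AddCommGroup M] [Module R M]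
    [AddCommGroup X] [Module R X] [AddCommGroup Y] [Module R Y]
    (μ : X →ₗ[R] Y) : Prop :=
  ∀ f : M →ₗ[R] Y, ∃ g : M →ₗ[R] X, μ.comp g = f


/-- `K` belongs to `add(M)`. -/
def InAdd (R M K : Type*) [Ring R] [AddCommGroup M] [Module R M]
    [AddCommGroup K] [Module R K] : Prop :=
  ∃ n : ℕ, 0 < n ∧ ∃ N N' : Submodule R (Fin n → M),
    IsCompl N N' ∧ Nonempty (K ≃ₗ[R] N)

/-- Generalized Schanuel lemma. -/
theorem stmt11 {R M K C D A B : Type*} [Ring R] [AddCommGroup M] [Module R M]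
    [AddCommGroup K] [Module R K] [AddCommGroup C] [Module R C]
    [AddCommGroup D] [Module R D] [AddCommGroup A] [Module R A]
    [AddCommGroup B] [Module R B]
    (hK : InAdd R M K)
    (σ : D →ₗ[R] K) (ρ : K →ₗ[R] C) (hσ : Function.Injective σ)
    (hρ : Function.Surjective ρ) (hex1 : Function.Exact σ ρ)
    (α : A →ₗ[R] B) (β : B →ₗ[R] C) (hα : Function.Injective α)
    (hβ : Function.Surjective β) (hex2 : Function.Exact α β)
    (hpure : MPure R M β) :
    ∃ (δ : D →ₗ[R] K × A) (η : K × A →ₗ[R] B),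
      Function.Injective δ ∧ Function.Surjective η ∧ Function.Exact δ η := by
  classical
  obtain ⟨n, -, N, N', hcompl, ⟨e⟩⟩ := hK
  -- Step 1: maps from M^n to C lift through β
  have hlift : ∀ f : (Fin n → M) →ₗ[R] C,
      ∃ g : (Fin n → M) →ₗ[R] B, β.comp g = f := by
    intro f
    choose g hg using fun i : Fin n =>
      hpure (f.comp (LinearMap.single R (fun _ => M) i))
    refine ⟨(LinearMap.lsum R (fun _ : Fin n => M) ℕ) g, ?_⟩
    ext i m
    have h1 := congrArg (fun h : M →ₗ[R] C => h m) (hg i)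
    simp only [LinearMap.comp_apply] at h1
    simp only [LinearMap.comp_apply, LinearMap.lsum_apply, LinearMap.sum_apply,
      LinearMap.comp_apply, LinearMap.proj_apply, map_sum]
    rw [Finset.sum_eq_single i]
    · simpa using h1
    · intro x _ hx
      simp [Pi.single_eq_of_ne hx]
    · simp
  -- Step 2: lift ρ through β using retraction from M^n to K
  obtain ⟨g, hg⟩ := hlift (ρ.comp (e.symm.toLinearMap.comp
    (N.projectionOnto N' hcompl)))
  set φ : K →ₗ[R] B := g.comp (N.subtype.comp e.toLinearMap) with hφdef
  have hβφ : ∀ k : K, β (φ k) = ρ k := by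
    intro k
    have h1 := congrArg (fun h : (Fin n → M) →ₗ[R] C => h ((e k : N) : Fin n → M)) hg
    simp only [LinearMap.comp_apply, LinearEquiv.coe_coe,
      Submodule.projectionOnto_apply_left, LinearEquiv.symm_apply_apply] at h1
    simpa [hφdef] using h1
  -- Step 3: φ ∘ σ lands in range α
  have hmem : ∀ d : D, φ (σ d) ∈ LinearMap.range α := by
    intro d
    rw [LinearMap.mem_range]
    have h0 : β (φ (σ d)) = 0 := by
      rw [hβφ]
      exact (hex1 (σ d)).mpr ⟨d, rfl⟩
    exact (hex2 (φ (σ d))).mp h0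
  set eA : A ≃ₗ[R] LinearMap.range α := LinearEquiv.ofInjective α hα with heA
  set ψ : D →ₗ[R] A := eA.symm.toLinearMap.comp
    (LinearMap.codRestrict (LinearMap.range α) (φ.comp σ) hmem) with hψdef
  have hαψ : ∀ d : D, α (ψ d) = φ (σ d) := by
    intro d
    have : (eA (ψ d) : B) = φ (σ d) := by
      simp [hψdef]
    simpa [heA, LinearEquiv.ofInjective_apply] using this
  refine ⟨LinearMap.prod σ (-ψ),
    φ.comp (LinearMap.fst R K A) + α.comp (LinearMap.snd R K A), ?_, ?_, ?_⟩
  · intro d d' h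
    exact hσ (congrArg Prod.fst h)
  · intro b
    obtain ⟨k, hk⟩ := hρ (β b)
    have : β (b - φ k) = 0 := by
      rw [map_sub, hβφ, hk, sub_self]
    obtain ⟨a, ha⟩ := (hex2 (b - φ k)).mp this
    exact ⟨(k, a), by simp [ha]⟩
  · intro y
    constructor
    · intro h
      obtain ⟨k, a⟩ := y
      simp only [LinearMap.add_apply, LinearMap.comp_apply, LinearMap.fst_apply,
        LinearMap.snd_apply] at h
      have hρk : ρ k = 0 := by
        have := congrArg β h
        simp only [map_add, map_zero, hβφ] at this
        have hβα : β (α a) = 0 := (hex2 (α a)).mpr ⟨a, rfl⟩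
        rw [hβα, add_zero] at this
        exact this
      obtain ⟨d, hd⟩ := (hex1 k).mp hρk
      refine ⟨d, ?_⟩
      have : α (ψ d + a) = 0 := by
        rw [map_add, hαψ, hd, h]
      have ha : ψ d + a = 0 := hα (by simpa using this)
      have ha' : a = -ψ d := eq_neg_of_add_eq_zero_right ha
      simp [LinearMap.prod, hd, ha']
    · rintro ⟨d, rfl⟩
      simp [hαψ]
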